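/- Let {X_k} be random variables in a sublinear expectation space with Ê[|X_k|³] ≤ M for all k, such that each X_{k+1} is independent from (X_1,…,X_k) and Ê[X_k] = Ê[-X_k] = 0. Set S_i = X_1 + ⋯ + X_i. Then for any 0 < α < 2 and any i ≤ n, Ê[|S_i/√n|^α] ≤ M^{α/3}. -/

import Mathlib

private lemma aux_amgm (a l : ℝ) (ha : 0 ≤ a) (hl : 0 < l) :
    a ^ 2 ≤ 2 / (3 * l) * a ^ 3 + l ^ 2 / 3 := by
  rw [div_mul_eq_mul_div, div_add_div _ _ (by positivity : (3:ℝ)*l ≠ 0) (by norm_num : (3:ℝ) ≠ 0),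
    le_div_iff₀ (by positivity)]
  nlinarith [sq_nonneg (a - l), mul_nonneg (mul_nonneg (sub_nonneg.2 (le_refl a)) ha) ha]

private lemma aux_amgm' (a l : ℝ) (ha : 0 ≤ a) (hl : 0 < l) :
    a ^ 2 ≤ 2 / (3 * l) * a ^ 3 + l ^ 2 / 3 := aux_amgm a l ha hl

private lemma aux_pt (t c α : ℝ) (ht : 0 ≤ t) (hc : 0 < c) (hα0 : 0 < α) (hα2 : α < 2) :
    t ^ α ≤ α / 2 * c ^ (α / 2 - 1) * t ^ 2 + (1 - α / 2) * c ^ (α / 2) := by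
  have h := Real.geom_mean_le_arith_mean2_weighted (w₁ := α/2) (w₂ := 1 - α/2)
    (p₁ := t^2) (p₂ := c) (by linarith) (by linarith) (sq_nonneg t) hc.le (by ring)
  have h1 : ((t^2 : ℝ)) ^ (α/2) = t ^ α := by
    rw [← Real.rpow_natCast t 2, ← Real.rpow_mul ht]
    congr 1; ring
  have h2 : c ^ (1 - α/2) * c ^ (α/2 - 1) = 1 := by
    rw [← Real.rpow_add hc]; norm_num
  have h3 : c * c ^ (α/2 - 1) = c ^ (α/2) := by
    nth_rewrite 1 [← Real.rpow_one c]
    rw [← Real.rpow_add hc]; ring_nf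
  have hpow : (0:ℝ) < c ^ (α/2 - 1) := Real.rpow_pos_of_pos hc _
  calc t ^ α = (t^2) ^ (α/2) * c ^ (1 - α/2) * c ^ (α/2 - 1) := by
        rw [mul_assoc, h2, mul_one, h1]
    _ ≤ (α/2 * t^2 + (1 - α/2) * c) * c ^ (α/2 - 1) :=
        mul_le_mul_of_nonneg_right h hpow.le
    _ = α/2 * c ^ (α/2 - 1) * t^2 + (1 - α/2) * (c * c ^ (α/2 - 1)) := by ring
    _ = _ := by rw [h3]

/-- Moment bound for normalized partial sums:
`Ê[|S_i/√n|^α] ≤ M^{α/3}` for `0 < α < 2`, `i ≤ n`. -/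
theorem stmt_17 {Ω : Type*} (E : (Ω → ℝ) → ℝ)
    (hmono : ∀ f g : Ω → ℝ, (∀ ω, f ω ≤ g ω) → E f ≤ E g)
    (hconst : ∀ c : ℝ, E (fun _ => c) = c)
    (hsub : ∀ f g : Ω → ℝ, E (f + g) ≤ E f + E g)
    (hpos : ∀ (l : ℝ) (f : Ω → ℝ), 0 ≤ l → E (l • f) = l * E f)
    (X : ℕ → Ω → ℝ) (M : ℝ) (hM : 0 < M)
    (hmom : ∀ k, E (fun ω => |X k ω| ^ 3) ≤ M)
    (hindep : ∀ (k : ℕ) (φ : (Fin (k + 1) → ℝ) → ℝ),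
      (∃ C > (0 : ℝ), ∃ m : ℕ, ∀ x y : Fin (k + 1) → ℝ,
        |φ x - φ y| ≤ C * (1 + ‖x‖ ^ m + ‖y‖ ^ m) * ‖x - y‖) →
      E (fun ω => φ (fun j => X j ω)) =
        E (fun ω => E (fun ω' =>
          φ (Fin.snoc (fun j : Fin k => X j ω) (X k ω')))))
    (hzero : ∀ k, E (X k) = 0 ∧ E (fun ω => -X k ω) = 0)
    (α : ℝ) (hα0 : 0 < α) (hα2 : α < 2) (i n : ℕ) (hin : i ≤ n) :
    E (fun ω => |(∑ k ∈ Finset.range i, X k ω) / Real.sqrt n| ^ α) ≤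
      M ^ (α / 3) := by
  -- basic consequences
  have hEmul : ∀ (c : ℝ) (f : Ω → ℝ), 0 ≤ c → E (fun ω => c * f ω) = c * E f := by
    intro c f hc
    have := hpos c f hc
    simpa [Pi.smul_def, smul_eq_mul] using this
  have haddc : ∀ (f : Ω → ℝ) (c : ℝ), E (fun ω => f ω + c) ≤ E f + c := by
    intro f c
    have h := hsub f (fun _ => c)
    rw [hconst] at h
    simpa [Pi.add_def] using h
  have hX2 : ∀ k, E (fun ω => X k ω ^ 2) ≤ M ^ ((2:ℝ)/3) := by
    intro k
    set l := M ^ ((1:ℝ)/3) with hl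
    have hlpos : 0 < l := Real.rpow_pos_of_pos hM _
    have hpt : ∀ ω, X k ω ^ 2 ≤ 2/(3*l) * |X k ω| ^ 3 + l^2/3 := by
      intro ω
      calc X k ω ^ 2 = |X k ω| ^ 2 := (sq_abs _).symm
        _ ≤ _ := aux_amgm _ _ (abs_nonneg _) hlpos
    have h1 : E (fun ω => X k ω ^ 2) ≤ E (fun ω => 2/(3*l) * |X k ω|^3 + l^2/3) :=
      hmono _ _ hpt
    have h2 : E (fun ω => 2/(3*l) * |X k ω|^3 + l^2/3) ≤
        E (fun ω => 2/(3*l) * |X k ω|^3) + l^2/3 := haddc _ _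
    have h3 : E (fun ω => 2/(3*l) * |X k ω|^3) = 2/(3*l) * E (fun ω => |X k ω|^3) :=
      hEmul _ _ (by positivity)
    have h4 : 2/(3*l) * E (fun ω => |X k ω|^3) ≤ 2/(3*l) * M :=
      mul_le_mul_of_nonneg_left (hmom k) (by positivity)
    have hMl : M / l = M ^ ((2:ℝ)/3) := by
      rw [hl]
      nth_rewrite 1 [← Real.rpow_one M]
      rw [← Real.rpow_sub hM]; norm_num
    have hl2 : l ^ 2 = M ^ ((2:ℝ)/3) := by
      rw [hl, ← Real.rpow_natCast (M ^ ((1:ℝ)/3)) 2, ← Real.rpow_mul hM.le]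
      norm_num
    have hfin : 2/(3*l) * M + l^2/3 = M ^ ((2:ℝ)/3) := by
      have e1 : 2/(3*l) * M = 2/3 * (M / l) := by
        field_simp
      rw [e1, hMl, hl2]; ring
    linarith
  have hcross : ∀ (k : ℕ) (s : ℝ), E (fun ω => s * X k ω) = 0 := by
    intro k s
    rcases le_or_gt 0 s with hs | hs
    · rw [hEmul s (X k) hs, (hzero k).1, mul_zero]
    · have heq : (fun ω => s * X k ω) = (fun ω => (-s) * (-X k ω)) := by
        funext ω; ring
      rw [heq, hEmul (-s) (fun ω => -X k ω) (by linarith), (hzero k).2, mul_zero]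
  have hstep : ∀ (k : ℕ) (s : ℝ), E (fun ω' => (s + X k ω')^2) ≤ s^2 + M ^ ((2:ℝ)/3) := by
    intro k s
    have heq : (fun ω' => (s + X k ω')^2) =
        (fun ω' => (2*s) * X k ω' + X k ω' ^ 2) + (fun _ => s^2) := by
      funext ω; simp only [Pi.add_apply]; ring
    have h0 := hsub (fun ω' => (2*s) * X k ω' + X k ω' ^ 2) (fun _ => s^2)
    rw [← heq, hconst] at h0
    have h1 := hsub (fun ω' => (2*s) * X k ω') (fun ω' => X k ω' ^ 2)
    have h1' : E (fun ω' => (2*s) * X k ω' + X k ω' ^ 2) ≤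
        E (fun ω' => (2*s) * X k ω') + E (fun ω' => X k ω' ^ 2) := by
      simpa [Pi.add_def] using h1
    have h2 := hcross k (2*s)
    have h3 := hX2 k
    linarith
  -- second moment of partial sums
  have hS2 : ∀ m : ℕ, E (fun ω => (∑ k ∈ Finset.range m, X k ω)^2) ≤ m * M ^ ((2:ℝ)/3) := by
    intro m
    induction m with
    | zero =>
        simp only [Finset.range_zero, Finset.sum_empty, Nat.cast_zero, zero_mul]
        norm_num [hconst 0]
    | succ m ih =>
        have hb : ∀ x : Fin (m+1) → ℝ, |∑ j, x j| ≤ (m+1 : ℝ) * ‖x‖ := by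
          intro x
          calc |∑ j, x j| ≤ ∑ j, |x j| := Finset.abs_sum_le_sum_abs _ _
            _ ≤ ∑ _j : Fin (m+1), ‖x‖ := Finset.sum_le_sum (fun j _ => by
                simpa [Real.norm_eq_abs] using norm_le_pi_norm x j)
            _ = (m+1 : ℝ) * ‖x‖ := by
                rw [Finset.sum_const, Finset.card_univ, Fintype.card_fin, nsmul_eq_mul]
                push_cast; ring
        have hlip : ∃ C > (0:ℝ), ∃ mm : ℕ, ∀ x y : Fin (m+1) → ℝ,
            |(∑ j, x j)^2 - (∑ j, y j)^2| ≤ C * (1 + ‖x‖ ^ mm + ‖y‖ ^ mm) * ‖x - y‖ := by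
          refine ⟨((m:ℝ)+1)^2, by positivity, 1, fun x y => ?_⟩
          have hd : (∑ j, x j)^2 - (∑ j, y j)^2 =
              (∑ j, x j - ∑ j, y j) * (∑ j, x j + ∑ j, y j) := by ring
          have hxy : |∑ j, x j - ∑ j, y j| ≤ (m+1 : ℝ) * ‖x - y‖ := by
            have : ∑ j, x j - ∑ j, y j = ∑ j, (x - y) j := by
              simp [Finset.sum_sub_distrib]
            rw [this]; exact hb (x - y)
          have hsum : |∑ j, x j + ∑ j, y j| ≤ (m+1 : ℝ) * ‖x‖ + (m+1 : ℝ) * ‖y‖ :=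
            (abs_add_le _ _).trans (add_le_add (hb x) (hb y))
          rw [hd, abs_mul]
          have hnx : (0:ℝ) ≤ ‖x‖ := norm_nonneg _
          have hny : (0:ℝ) ≤ ‖y‖ := norm_nonneg _
          have hnxy : (0:ℝ) ≤ ‖x - y‖ := norm_nonneg _
          calc |∑ j, x j - ∑ j, y j| * |∑ j, x j + ∑ j, y j|
              ≤ ((m+1 : ℝ) * ‖x - y‖) * ((m+1 : ℝ) * ‖x‖ + (m+1 : ℝ) * ‖y‖) := by
                apply mul_le_mul hxy hsum (abs_nonneg _) (by positivity)
            _ ≤ ((m:ℝ)+1)^2 * (1 + ‖x‖ ^ 1 + ‖y‖ ^ 1) * ‖x - y‖ := by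
                simp only [pow_one]; nlinarith [Nat.cast_nonneg (α := ℝ) m]
        have hind := hindep m (fun x => (∑ j, x j)^2) hlip
        have hL : (fun ω => (∑ j : Fin (m+1), X (j : ℕ) ω)^2) =
            (fun ω => (∑ k ∈ Finset.range (m+1), X k ω)^2) := by
          funext ω; rw [Fin.sum_univ_eq_sum_range (fun k => X k ω) (m+1)]
        have hR : ∀ ω, (fun ω' =>
            (∑ j : Fin (m+1), Fin.snoc (fun j : Fin m => X (j : ℕ) ω) (X m ω') j)^2) =
            (fun ω' => ((∑ k ∈ Finset.range m, X k ω) + X m ω')^2) := by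
          intro ω; funext ω'
          rw [Fin.sum_snoc, Fin.sum_univ_eq_sum_range (fun k => X k ω) m]
        rw [hL] at hind
        rw [hind]
        have hinner : ∀ ω, E (fun ω' =>
            (∑ j : Fin (m+1), Fin.snoc (fun j : Fin m => X (j : ℕ) ω) (X m ω') j)^2) ≤
            (∑ k ∈ Finset.range m, X k ω)^2 + M ^ ((2:ℝ)/3) := by
          intro ω
          rw [hR ω]
          exact hstep m _
        calc E (fun ω => E (fun ω' =>
              (∑ j : Fin (m+1), Fin.snoc (fun j : Fin m => X (j : ℕ) ω) (X m ω') j)^2))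
            ≤ E (fun ω => (∑ k ∈ Finset.range m, X k ω)^2 + M ^ ((2:ℝ)/3)) :=
              hmono _ _ hinner
          _ ≤ E (fun ω => (∑ k ∈ Finset.range m, X k ω)^2) + M ^ ((2:ℝ)/3) := haddc _ _
          _ ≤ m * M ^ ((2:ℝ)/3) + M ^ ((2:ℝ)/3) := by linarith
          _ = (m+1 : ℕ) * M ^ ((2:ℝ)/3) := by push_cast; ring
  -- final step
  rcases Nat.eq_zero_or_pos n with hn | hn
  · subst hn
    have hi : i = 0 := Nat.le_zero.mp hin
    subst hi
    simp only [Nat.cast_zero]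
    have : (fun ω : Ω => |(∑ k ∈ Finset.range 0, X k ω) / Real.sqrt 0| ^ α) =
        fun _ : Ω => (0:ℝ) := by
      funext ω
      simp [Real.zero_rpow hα0.ne']
    rw [this, hconst]
    positivity
  · have hnpos : (0:ℝ) < n := by exact_mod_cast hn
    set c : ℝ := M ^ ((2:ℝ)/3) with hc
    have hcpos : 0 < c := Real.rpow_pos_of_pos hM _
    have hcM : c ^ (α/2) = M ^ (α/3) := by
      rw [hc, ← Real.rpow_mul hM.le]
      norm_num
    have hcc : c ^ (α/2 - 1) * c = c ^ (α/2) := by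
      nth_rewrite 2 [← Real.rpow_one c]
      rw [← Real.rpow_add hcpos]; ring_nf
    set A : ℝ := α/2 * c ^ (α/2 - 1) / n with hA
    have hApos : 0 ≤ A := by positivity
    have hpt : ∀ ω, |(∑ k ∈ Finset.range i, X k ω) / Real.sqrt n| ^ α ≤
        A * (∑ k ∈ Finset.range i, X k ω)^2 + (1 - α/2) * c ^ (α/2) := by
      intro ω
      set s := ∑ k ∈ Finset.range i, X k ω with hs
      have ht : (0:ℝ) ≤ |s / Real.sqrt n| := abs_nonneg _
      have h := aux_pt (|s / Real.sqrt n|) c α ht hcpos hα0 hα2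
      have ht2 : |s / Real.sqrt n| ^ 2 = s ^ 2 / n := by
        rw [sq_abs, div_pow, Real.sq_sqrt (Nat.cast_nonneg n)]
      rw [ht2] at h
      calc |s / Real.sqrt n| ^ α ≤ α/2 * c ^ (α/2 - 1) * (s^2 / n) + (1 - α/2) * c ^ (α/2) := h
        _ = A * s^2 + (1 - α/2) * c ^ (α/2) := by rw [hA]; ring
    have h1 : E (fun ω => |(∑ k ∈ Finset.range i, X k ω) / Real.sqrt n| ^ α) ≤
        E (fun ω => A * (∑ k ∈ Finset.range i, X k ω)^2 + (1 - α/2) * c ^ (α/2)) :=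
      hmono _ _ hpt
    have h2 : E (fun ω => A * (∑ k ∈ Finset.range i, X k ω)^2 + (1 - α/2) * c ^ (α/2)) ≤
        E (fun ω => A * (∑ k ∈ Finset.range i, X k ω)^2) + (1 - α/2) * c ^ (α/2) :=
      haddc _ _
    have h3 : E (fun ω => A * (∑ k ∈ Finset.range i, X k ω)^2) =
        A * E (fun ω => (∑ k ∈ Finset.range i, X k ω)^2) := hEmul _ _ hApos
    have h4 : A * E (fun ω => (∑ k ∈ Finset.range i, X k ω)^2) ≤ A * (i * c) :=
      mul_le_mul_of_nonneg_left (by simpa [hc] using hS2 i) hApos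
    have h5 : A * (i * c) ≤ α/2 * c ^ (α/2) := by
      have hin' : (i:ℝ) / n ≤ 1 := by
        rw [div_le_one hnpos]; exact_mod_cast hin
      have e : A * (i * c) = (α/2 * (c ^ (α/2 - 1) * c)) * ((i:ℝ)/n) := by
        rw [hA]; field_simp
      rw [e, hcc]
      calc (α/2 * c ^ (α/2)) * ((i:ℝ)/n) ≤ (α/2 * c ^ (α/2)) * 1 := by
            apply mul_le_mul_of_nonneg_left hin' (by positivity)
        _ = α/2 * c ^ (α/2) := mul_one _
    have hfinal : α/2 * c ^ (α/2) + (1 - α/2) * c ^ (α/2) = M ^ (α/3) := by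
      rw [← hcM]; ring
    linarith
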